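/- Let μ be a probability measure on ℝ^P supported in (0,∞)^P, and for t ∈ ℝ^P with all t_p ≤ 0 let M_μ(t) = ∫ e^(Σ_{p=1}^P t_p·β_p) dμ(β) (this integral is finite). Assume Σ_{k ∈ ℕ^M} M_μ(−K_1(k), …, −K_P(k)) < ∞. Then ∫ [∏_{m=1}^M e^(−y_m·(X_m·β)) / (1 + e^(−(X_m·β)))] dμ(β) = Σ_{k ∈ ℕ^M} (−1)^{|k|} · M_μ(−K_1(k), …, −K_P(k)). -/

import Mathlib

/-!
On the support of `μ` every linear predictor `s = X_m·β` is positive, so each logistic factor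
expands as a geometric series, `e^{-y s} / (1 + e^{-s}) = Σ_j (-1)^j e^{-(y + j) s}`. The product
of these `M` absolutely convergent series is one series over `ℕ^M` whose `k`-th term is
`(-1)^{|k|} e^{-Σ_p K_p(k) β_p}`. The absolute values of these terms have integrals
`M_μ(-K(k))`, which are summable by assumption, so integral and sum may be interchanged.
-/

open MeasureTheory

/-- `K_p(k) = Σ_m (y_m + k_m)·x_{m,p}` -/
noncomputable def Kcoef {M P : ℕ} (x : Fin M → Fin P → ℝ) (y : Fin M → ℝ)
    (k : Fin M → ℕ) (p : Fin P) : ℝ :=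
  ∑ m, (y m + k m) * x m p

section PiProd

variable {R κ : Type*} [NormedCommRing R]

theorem summable_norm_prod_pi {n : ℕ} (f : Fin n → κ → R)
    (hf : ∀ i, Summable fun j => ‖f i j‖) :
    Summable fun k : Fin n → κ => ‖∏ i, f i (k i)‖ := by
  induction n with
  | zero => exact .of_finite
  | succ n ih =>
    rw [← (Fin.consEquiv fun _ => κ).summable_iff]
    simpa [Function.comp_def, Fin.consEquiv, Fin.prod_univ_succ] using
      (hf 0).mul_norm (ih (fun i => f i.succ) fun i => hf i.succ)

theorem tsum_prod_pi_eq_prod_tsum [CompleteSpace R] {n : ℕ} (f : Fin n → κ → R)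
    (hf : ∀ i, Summable fun j => ‖f i j‖) :
    ∑' k : Fin n → κ, ∏ i, f i (k i) = ∏ i, ∑' j, f i j := by
  induction n with
  | zero => simp
  | succ n ih =>
    rw [← (Fin.consEquiv fun _ => κ).tsum_eq, Fin.prod_univ_succ,
      ← ih (fun i => f i.succ) fun i => hf i.succ,
      tsum_mul_tsum_of_summable_norm (hf 0) (summable_norm_prod_pi _ fun i => hf i.succ)]
    simp [Fin.consEquiv, Fin.prod_univ_succ]

end PiProd

theorem neg_one_pow_mul_exp_eq (a s : ℝ) (j : ℕ) :
    (-1 : ℝ) ^ j * Real.exp (-((a + j) * s)) = Real.exp (-(a * s)) * (-Real.exp (-s)) ^ j := by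
  rw [neg_pow (Real.exp (-s)), ← Real.exp_nat_mul, mul_left_comm, ← Real.exp_add]
  ring_nf

theorem norm_neg_exp_lt_one {s : ℝ} (hs : 0 < s) : ‖-Real.exp (-s)‖ < 1 := by
  rw [norm_neg, Real.norm_of_nonneg (Real.exp_pos _).le, Real.exp_lt_one_iff]
  linarith

theorem summable_norm_neg_one_pow_mul_exp {s : ℝ} (hs : 0 < s) (a : ℝ) :
    Summable fun j : ℕ => ‖(-1 : ℝ) ^ j * Real.exp (-((a + j) * s))‖ := by
  simpa only [neg_one_pow_mul_exp_eq, norm_mul] using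
    (summable_norm_geometric_of_norm_lt_one (norm_neg_exp_lt_one hs)).mul_left
      ‖Real.exp (-(a * s))‖

theorem tsum_neg_one_pow_mul_exp {s : ℝ} (hs : 0 < s) (a : ℝ) :
    ∑' j : ℕ, (-1 : ℝ) ^ j * Real.exp (-((a + j) * s))
      = Real.exp (-(a * s)) / (1 + Real.exp (-s)) := by
  simpa only [neg_one_pow_mul_exp_eq, sub_neg_eq_add, div_eq_mul_inv] using
    ((hasSum_geometric_of_norm_lt_one (norm_neg_exp_lt_one hs)).mul_left
      (Real.exp (-(a * s)))).tsum_eq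

theorem prod_logistic_eq_tsum {M : ℕ} (a s : Fin M → ℝ) (hs : ∀ m, 0 < s m) :
    ∏ m, Real.exp (-(a m * s m)) / (1 + Real.exp (-s m))
      = ∑' k : Fin M → ℕ,
          (-1 : ℝ) ^ (∑ m, k m) * Real.exp (∑ m, -((a m + k m) * s m)) := by
  simp_rw [← tsum_neg_one_pow_mul_exp (hs _),
    ← tsum_prod_pi_eq_prod_tsum _ fun m => summable_norm_neg_one_pow_mul_exp (hs m) (a m),
    Finset.prod_mul_distrib, Finset.prod_pow_eq_pow_sum, Real.exp_sum]

theorem sum_neg_Kcoef_mul {M P : ℕ} (x : Fin M → Fin P → ℝ) (y : Fin M → ℝ)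
    (k : Fin M → ℕ) (β : Fin P → ℝ) :
    ∑ p, -Kcoef x y k p * β p = ∑ m, -((y m + k m) * ∑ p, x m p * β p) := by
  simp only [Kcoef, neg_mul, Finset.sum_neg_distrib, Finset.sum_mul, Finset.mul_sum, mul_assoc]
  rw [Finset.sum_comm]

theorem integrable_exp_sum_mul_of_nonpos {ι : Type*} [Fintype ι] (μ : Measure (ι → ℝ))
    [IsFiniteMeasure μ] (hμ : ∀ᵐ β ∂μ, ∀ i, 0 ≤ β i) {t : ι → ℝ} (ht : ∀ i, t i ≤ 0) :
    Integrable (fun β => Real.exp (∑ i, t i * β i)) μ := by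
  refine (integrable_const 1).mono' (by fun_prop : Continuous _).aestronglyMeasurable ?_
  filter_upwards [hμ] with β hβ
  rw [Real.norm_of_nonneg (Real.exp_pos _).le, Real.exp_le_one_iff]
  exact Finset.sum_nonpos fun i _ => mul_nonpos_of_nonpos_of_nonneg (ht i) (hβ i)

theorem integral_logit_eq_tsum_mgf_general (M P : ℕ)
    (x : Fin M → Fin P → ℝ) (hx : ∀ m p, 0 ≤ x m p) (hx' : ∀ m, ∃ p, 0 < x m p)
    (y : Fin M → ℝ) (hy : ∀ m, y m = 0 ∨ y m = 1)
    (μ : Measure (Fin P → ℝ)) [IsProbabilityMeasure μ]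
    (hsupp : μ {β | ∀ p, 0 < β p}ᶜ = 0)
    (hsum : Summable fun k : Fin M → ℕ =>
      ∫ β, Real.exp (∑ p, -Kcoef x y k p * β p) ∂μ) :
    (∀ t : Fin P → ℝ, (∀ p, t p ≤ 0) →
      Integrable (fun β => Real.exp (∑ p, t p * β p)) μ) ∧
    ∫ β, ∏ m, Real.exp (-(y m * ∑ p, x m p * β p)) /
        (1 + Real.exp (-(∑ p, x m p * β p))) ∂μ
      = ∑' k : Fin M → ℕ,
          (-1 : ℝ) ^ (∑ m, k m) * ∫ β, Real.exp (∑ p, -Kcoef x y k p * β p) ∂μ := by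
  have hβ : ∀ᵐ β ∂μ, ∀ p, 0 < β p := measure_eq_zero_iff_ae_notMem.mp hsupp |>.mono
    fun β h => by simpa using h
  have hmgf (t : Fin P → ℝ) (ht : ∀ p, t p ≤ 0) :
      Integrable (fun β => Real.exp (∑ p, t p * β p)) μ :=
    integrable_exp_sum_mul_of_nonpos μ (hβ.mono fun β h p => (h p).le) ht
  have hXβ : ∀ᵐ β ∂μ, ∀ m, 0 < ∑ p, x m p * β p := hβ.mono fun β hβ m => by
    obtain ⟨p, hp⟩ := hx' m
    exact Finset.sum_pos' (fun q _ => mul_nonneg (hx m q) (hβ q).le)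
      ⟨p, Finset.mem_univ p, mul_pos hp (hβ p)⟩
  have hK k p : -Kcoef x y k p ≤ 0 := neg_nonpos.mpr <| Finset.sum_nonneg fun m _ =>
    mul_nonneg (add_nonneg (by rcases hy m with h | h <;> simp [h]) (k m).cast_nonneg) (hx m p)
  refine ⟨hmgf, ?_⟩
  calc _ = ∫ β, ∑' k : Fin M → ℕ,
          (-1 : ℝ) ^ (∑ m, k m) * Real.exp (∑ p, -Kcoef x y k p * β p) ∂μ := by
        refine integral_congr_ae (hXβ.mono fun β hs => ?_)
        simp_rw [sum_neg_Kcoef_mul]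
        exact prod_logistic_eq_tsum _ _ hs
    _ = ∑' k : Fin M → ℕ, ∫ β,
          (-1 : ℝ) ^ (∑ m, k m) * Real.exp (∑ p, -Kcoef x y k p * β p) ∂μ := by
        refine (integral_tsum_of_summable_integral_norm (fun k => (hmgf _ (hK k)).const_mul _)
          ?_).symm
        simpa [Real.abs_exp] using hsum
    _ = _ := tsum_congr fun k => integral_const_mul _ _

/-- Theorem 4 of the paper: the marginalized logit likelihood against any probability
distribution `μ` supported in `(0,∞)^P` is given by an alternating series of evaluations
of the moment generating function `M_μ(t) = ∫ e^(Σ_p t_p β_p) dμ(β)` of `μ` at the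
nonpositive points `(−K_1(k), …, −K_P(k))`. -/
theorem integral_logit_eq_tsum_mgf (M P : ℕ) (hM : 1 ≤ M) (hP : 1 ≤ P)
    (x : Fin M → Fin P → ℝ) (hx : ∀ m p, 0 ≤ x m p) (hx' : ∀ m, ∃ p, 0 < x m p)
    (y : Fin M → ℝ) (hy : ∀ m, y m = 0 ∨ y m = 1)
    (μ : Measure (Fin P → ℝ)) [IsProbabilityMeasure μ]
    (hsupp : μ {β | ∀ p, 0 < β p}ᶜ = 0)
    (hsum : Summable fun k : Fin M → ℕ =>
      ∫ β, Real.exp (∑ p, -Kcoef x y k p * β p) ∂μ) :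
    (∀ t : Fin P → ℝ, (∀ p, t p ≤ 0) →
      Integrable (fun β => Real.exp (∑ p, t p * β p)) μ) ∧
    ∫ β, ∏ m, Real.exp (-(y m * ∑ p, x m p * β p)) /
        (1 + Real.exp (-(∑ p, x m p * β p))) ∂μ
      = ∑' k : Fin M → ℕ,
          (-1 : ℝ) ^ (∑ m, k m) * ∫ β, Real.exp (∑ p, -Kcoef x y k p * β p) ∂μ :=
  integral_logit_eq_tsum_mgf_general M P x hx hx' y hy μ hsupp hsum
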